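/- Let (Ω_1, μ_1), …, (Ω_n, μ_n) be probability spaces and let μ = μ_1 ⊗ ⋯ ⊗ μ_n be the product measure on Ω_1 × ⋯ × Ω_n. Let B ⊆ Ω_1 × ⋯ × Ω_n be a measurable set with μ(B) = 1. Then there exist countable sets I_α ⊆ Ω_α (α = 1, …, n) such that every tuple (c_1, …, c_n) ∈ I_1 × ⋯ × I_n lies in B, and moreover each I_α can be chosen so that (I_α viewed as a sequence) avoids any prescribed countable family of μ_α^{⊗ω}-null measurable subsets of Ω_α^ω. -/

import Mathlib

/-!
Draw the sequences `b i` at random, independently, from `ν i`. For every choice `f` of one index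
per coordinate, the tuple `(b i (f i))ᵢ` is then distributed according to `Measure.pi μ`, so it
lies in `B` almost surely. There are only countably many choices `f` and countably many null sets
`N i m`, so almost every `b` satisfies all these conditions at once, and in particular some `b`
does.
-/

open MeasureTheory

theorem measurePreserving_eval_of_measure_eq {α κ : Type*} [MeasurableSpace α] {μ : Measure α}
    {ν : Measure (κ → α)} (j : κ) (h : ∀ s, MeasurableSet s → ν {x | x j ∈ s} = μ s) :
    MeasurePreserving (fun x => x j) ν μ :=
  ⟨measurable_pi_apply j, Measure.ext fun s hs => by
    rw [Measure.map_apply (measurable_pi_apply j) hs]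
    exact h s hs⟩

theorem ae_forall_select_mem {ι κ : Type*} [Fintype ι] [Countable κ] {Ω : ι → Type*}
    [∀ i, MeasurableSpace (Ω i)] {μ : (i : ι) → Measure (Ω i)} [∀ i, SigmaFinite (μ i)]
    {ν : (i : ι) → Measure (κ → Ω i)} [∀ i, SigmaFinite (ν i)]
    (hν : ∀ i j, MeasurePreserving (fun x => x j) (ν i) (μ i))
    {B : Set ((i : ι) → Ω i)} (hB : ∀ᵐ c ∂Measure.pi μ, c ∈ B) :
    ∀ᵐ b ∂Measure.pi ν, ∀ f : ι → κ, (fun i => b i (f i)) ∈ B :=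
  ae_all_iff.2 fun f =>
    (measurePreserving_pi ν μ fun i => hν i (f i)).quasiMeasurePreserving.ae hB

theorem ae_forall_eval_notMem {ι κ ι' : Type*} [Fintype ι] [Countable ι'] {Ω : ι → Type*}
    [∀ i, MeasurableSpace (Ω i)] {ν : (i : ι) → Measure (κ → Ω i)}
    [∀ i, SigmaFinite (ν i)] {N : (i : ι) → ι' → Set (κ → Ω i)}
    (hN : ∀ i m, ν i (N i m) = 0) :
    ∀ᵐ b ∂Measure.pi ν, ∀ i m, b i ∉ N i m :=
  ae_all_iff.2 fun i => ae_all_iff.2 fun m =>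
    (Measure.quasiMeasurePreserving_eval ν i).ae (measure_eq_zero_iff_ae_notMem.1 (hN i m))

/-- `ν i` plays the role of the countable power `(μ i)^{⊗ω}`, pinned down by its
finite-dimensional marginals. -/
theorem stmt4_general {n : ℕ} {Ω : Fin n → Type*} [∀ i, MeasurableSpace (Ω i)]
    (μ : (i : Fin n) → Measure (Ω i)) [∀ i, IsProbabilityMeasure (μ i)]
    (B : Set ((i : Fin n) → Ω i)) (hB : MeasurableSet B)
    (h1 : Measure.pi μ B = 1)
    (ν : (i : Fin n) → Measure (ℕ → Ω i)) [∀ i, IsProbabilityMeasure (ν i)]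
    (hν : ∀ (i : Fin n) (t : Finset ℕ) (s : ℕ → Set (Ω i)),
      (∀ j, MeasurableSet (s j)) →
      ν i {x | ∀ j ∈ t, x j ∈ s j} = ∏ j ∈ t, μ i (s j))
    (N : (i : Fin n) → ℕ → Set (ℕ → Ω i))
    (hN0 : ∀ i m, ν i (N i m) = 0) :
    ∃ b : (i : Fin n) → ℕ → Ω i,
      (∀ i m, b i ∉ N i m) ∧
      ∀ c : (i : Fin n) → Ω i, (∀ i, ∃ j, c i = b i j) → c ∈ B := by
  have heval (i : Fin n) (j : ℕ) : MeasurePreserving (fun x => x j) (ν i) (μ i) :=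
    measurePreserving_eval_of_measure_eq j fun s hs => by
      simpa using hν i {j} (fun _ => s) fun _ => hs
  have hBae : ∀ᵐ c ∂Measure.pi μ, c ∈ B :=
    (ae_mem_iff_measure_eq hB.nullMeasurableSet).2 (by rw [h1, measure_univ])
  obtain ⟨b, hbN, hbB⟩ :=
    ((ae_forall_eval_notMem hN0).and (ae_forall_select_mem heval hBae)).exists
  refine ⟨b, hbN, fun c hc => ?_⟩
  choose f hf using hc
  simpa only [← hf] using hbB f

/-- From a measurable set of full product measure one can extract, for each
coordinate, a sequence avoiding any prescribed countable family of null sets of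
the countable power `μ_α^{⊗ω}` (given here as a probability measure `ν α` on
`ℕ → Ω α` whose finite-dimensional marginals are products), such that the
Cartesian product of the ranges of these sequences lies inside `B`. -/
theorem stmt4 {n : ℕ} {Ω : Fin n → Type*} [∀ i, MeasurableSpace (Ω i)]
    (μ : (i : Fin n) → Measure (Ω i)) [∀ i, IsProbabilityMeasure (μ i)]
    (B : Set ((i : Fin n) → Ω i)) (hB : MeasurableSet B)
    (h1 : Measure.pi μ B = 1)
    (ν : (i : Fin n) → Measure (ℕ → Ω i)) [∀ i, IsProbabilityMeasure (ν i)]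
    (hν : ∀ (i : Fin n) (t : Finset ℕ) (s : ℕ → Set (Ω i)),
      (∀ j, MeasurableSet (s j)) →
      ν i {x | ∀ j ∈ t, x j ∈ s j} = ∏ j ∈ t, μ i (s j))
    (N : (i : Fin n) → ℕ → Set (ℕ → Ω i))
    (hNm : ∀ i m, MeasurableSet (N i m))
    (hN0 : ∀ i m, ν i (N i m) = 0) :
    ∃ b : (i : Fin n) → ℕ → Ω i,
      (∀ i m, b i ∉ N i m) ∧
      ∀ c : (i : Fin n) → Ω i, (∀ i, ∃ j, c i = b i j) → c ∈ B :=
  stmt4_general μ B hB h1 ν hν N hN0
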